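/- arXiv:1408.5268 — 3 statements merged into one kernel-verified Lean document; each statement's English description precedes it below -/
import Mathlib

section
/- For every positive integer n, the Landau constant partial sum S_n = ∑_{k=0}^{n-1} ((1/2)_k)^2/(k!)^2 satisfies S_n = (λ_n/π) · ∑_{k=0}^∞ [((1/2)_k)^2 / ((n+1)_k k!)] · {ψ(n+1+k) + ψ(1+k) − 2ψ(1/2+k)}, where λ_n = Γ(n+1/2)^2/(Γ(n)Γ(n+1)). -/
/-- The Pochhammer (rising factorial) symbol `(x)_k` for real `x`. -/
noncomputable def rpoch (x : ℝ) (k : ℕ) : ℝ := ∏ i ∈ Finset.range k, (x + i)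

/-- The digamma function `ψ = Γ'/Γ` on `ℝ`. -/
noncomputable def rdigamma (x : ℝ) : ℝ := deriv Real.Gamma x / Real.Gamma x

/-!
Write `c(n,k) = ((1/2)_k)² / ((n+1)_k k!)` and `B(n,k) = ψ(n+1+k) + ψ(1+k) − 2ψ(1/2+k)`,
so that the series is `T_n = ∑_k c(n,k) B(n,k)`. The functional equation `ψ(x+1) = ψ(x) + 1/x` gives
first-order recurrences for `B` in both variables, and with them the Wilf–Zeilberger relation
`c(n+1,k) B(n+1,k) = β_n (n c(n,k) B(n,k) + G(n,k) − G(n,k+1))`, where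
`G(n,k) = c(n,k) (1 − k B(n,k))` and `β_n = 4(n+1)/(2n+1)²`.
Monotonicity of `ψ` (log-convexity of `Γ`) gives `0 ≤ k B(n,k) ≤ n + 2`, and
`c(n,k) ≤ 1/(2k+1)`, so `G(n,k) → 0` and telescoping yields `T_{n+1} = β_n (n T_n + 1)`;
in particular `T_1 = 4`.
The quotient `S_n / (λ_n/π)` satisfies the same recurrence with the same initial value.
-/

open Real Finset Filter Topology
open scoped Nat

lemma rpoch_succ (x : ℝ) (k : ℕ) : rpoch x (k + 1) = rpoch x k * (x + k) :=
  prod_range_succ _ _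

lemma rpoch_succ' (x : ℝ) (k : ℕ) : rpoch x (k + 1) = x * rpoch (x + 1) k := by
  simp only [rpoch, prod_range_succ', Nat.cast_add, Nat.cast_one, Nat.cast_zero, add_zero,
    add_assoc, add_comm (1 : ℝ), mul_comm x]

lemma rpoch_pos {x : ℝ} (hx : 0 < x) (k : ℕ) : 0 < rpoch x k :=
  prod_pos fun _ _ => by positivity

lemma Gamma_add_nat_eq_rpoch_mul {x : ℝ} (hx : 0 < x) (n : ℕ) :
    Gamma (x + n) = rpoch x n * Gamma x := by
  induction n with
  | zero => simp [rpoch]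
  | succ n ih =>
    rw [Nat.cast_succ, ← add_assoc, Gamma_add_one (by positivity), ih, rpoch_succ]
    ring

lemma Gamma_nat_add_half_eq_rpoch (n : ℕ) : Gamma (n + 1 / 2) = rpoch (1 / 2) n * √π := by
  rw [add_comm, Gamma_add_nat_eq_rpoch_mul one_half_pos, Gamma_one_half_eq]

lemma differentiableAt_Gamma_of_pos {x : ℝ} (hx : 0 < x) : DifferentiableAt ℝ Gamma x :=
  differentiableAt_Gamma fun m => by linarith [(m.cast_nonneg : (0 : ℝ) ≤ m)]

lemma rdigamma_add_one {x : ℝ} (hx : 0 < x) : rdigamma (x + 1) = rdigamma x + x⁻¹ := by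
  have hΓ : HasDerivAt (fun y => Gamma (y + 1)) (1 * Gamma x + x * deriv Gamma x) x := by
    refine ((hasDerivAt_id x).mul
      (differentiableAt_Gamma_of_pos hx).hasDerivAt).congr_of_eventuallyEq ?_
    filter_upwards [lt_mem_nhds hx] with y hy using Gamma_add_one hy.ne'
  rw [rdigamma, rdigamma, ← deriv_comp_add_const, hΓ.deriv, Gamma_add_one hx.ne']
  field_simp [(Gamma_pos_of_pos hx).ne']
  ring

lemma rdigamma_monotoneOn : MonotoneOn rdigamma (Set.Ioi 0) := by
  have hd : ∀ x ∈ Set.Ioi (0 : ℝ), DifferentiableAt ℝ (log ∘ Gamma) x := fun x hx =>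
    (differentiableAt_Gamma_of_pos hx).log (Gamma_pos_of_pos hx).ne'
  refine (convexOn_log_Gamma.monotoneOn_deriv hd).congr fun x hx => ?_
  rw [Function.comp_def, deriv.log (differentiableAt_Gamma_of_pos hx) (Gamma_pos_of_pos hx).ne',
    rdigamma]

lemma rdigamma_le_of_le_add_one {x y : ℝ} (hx : 0 < x) (hy : 0 < y) (hyx : y ≤ x + 1) :
    rdigamma y ≤ rdigamma x + x⁻¹ :=
  rdigamma_add_one hx ▸ rdigamma_monotoneOn hy (by simp only [Set.mem_Ioi]; linarith) hyx

lemma rdigamma_add_nat_le {x : ℝ} (hx : 0 < x) (n : ℕ) :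
    rdigamma (x + n) ≤ rdigamma x + n / x := by
  induction n with
  | zero => simp
  | succ n ih =>
    have hxn : 0 < x + n := by positivity
    have hinv : (x + n)⁻¹ ≤ x⁻¹ := inv_anti₀ hx (by linarith [(n.cast_nonneg : (0 : ℝ) ≤ n)])
    rw [Nat.cast_succ, ← add_assoc, rdigamma_add_one hxn, add_div, one_div]
    linarith

noncomputable def watsonCoeff (n k : ℕ) : ℝ :=
  rpoch (1 / 2) k ^ 2 / (rpoch ((n : ℝ) + 1) k * (k ! : ℝ))

noncomputable def watsonBracket (n k : ℕ) : ℝ :=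
  rdigamma ((n : ℝ) + 1 + k) + rdigamma (1 + k) - 2 * rdigamma (1 / 2 + k)

noncomputable def watsonTerm (n k : ℕ) : ℝ := watsonCoeff n k * watsonBracket n k

lemma watsonCoeff_pos (n k : ℕ) : 0 < watsonCoeff n k := by
  have := rpoch_pos one_half_pos k
  have := rpoch_pos (n.cast_add_one_pos (α := ℝ)) k
  unfold watsonCoeff
  positivity

@[simp]
lemma watsonCoeff_zero_right (n : ℕ) : watsonCoeff n 0 = 1 := by simp [watsonCoeff, rpoch]

lemma watsonCoeff_succ_right (n k : ℕ) :
    watsonCoeff n (k + 1) = watsonCoeff n k * ((k + 1 / 2) ^ 2 / ((n + 1 + k) * (k + 1))) := by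
  have := (rpoch_pos (n.cast_add_one_pos (α := ℝ)) k).ne'
  rw [watsonCoeff, watsonCoeff, rpoch_succ, rpoch_succ, Nat.factorial_succ]
  push_cast
  field_simp
  ring

lemma watsonCoeff_succ_left (n k : ℕ) :
    watsonCoeff (n + 1) k = watsonCoeff n k * ((n + 1) / (n + 1 + k)) := by
  have hshift : rpoch ((n : ℝ) + 1 + 1) k = rpoch ((n : ℝ) + 1) k * (n + 1 + k) / (n + 1) := by
    rw [eq_div_iff (by positivity), mul_comm, ← rpoch_succ', rpoch_succ]
  have := (rpoch_pos (n.cast_add_one_pos (α := ℝ)) k).ne'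
  rw [watsonCoeff, watsonCoeff, Nat.cast_succ, hshift]
  field_simp

lemma watsonCoeff_le (n k : ℕ) : watsonCoeff n k ≤ 1 / (2 * k + 1) := by
  induction k with
  | zero => simp
  | succ k ih =>
    rw [watsonCoeff_succ_right]
    calc watsonCoeff n k * ((k + 1 / 2) ^ 2 / ((n + 1 + k) * (k + 1)))
        ≤ 1 / (2 * k + 1) * ((k + 1 / 2) ^ 2 / ((n + 1 + k) * (k + 1))) := by gcongr
      _ ≤ 1 / (2 * ↑(k + 1) + 1) := by
        rw [div_mul_div_comm, div_le_div_iff₀ (by positivity) (by positivity)]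
        push_cast
        nlinarith [(n.cast_nonneg : (0 : ℝ) ≤ n), (k.cast_nonneg : (0 : ℝ) ≤ k)]

lemma tendsto_watsonCoeff_atTop (n : ℕ) : Tendsto (watsonCoeff n) atTop (𝓝 0) := by
  refine squeeze_zero (fun k => (watsonCoeff_pos n k).le) (watsonCoeff_le n) ?_
  simp only [one_div]
  exact (tendsto_atTop_add_const_right _ 1 <|
    (tendsto_natCast_atTop_atTop (R := ℝ)).const_mul_atTop two_pos).inv_tendsto_atTop

lemma watsonBracket_succ_left (n k : ℕ) :
    watsonBracket (n + 1) k = watsonBracket n k + ((n : ℝ) + 1 + k)⁻¹ := by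
  have h : ((n + 1 : ℕ) : ℝ) + 1 + k = (n + 1 + k) + 1 := by push_cast; ring
  rw [watsonBracket, watsonBracket, h, rdigamma_add_one (by positivity)]
  ring

lemma watsonBracket_succ_right (n k : ℕ) :
    watsonBracket n (k + 1) =
      watsonBracket n k + ((n : ℝ) + 1 + k)⁻¹ + ((1 : ℝ) + k)⁻¹ - 2 * ((1 / 2 : ℝ) + k)⁻¹ := by
  have h₁ : (n : ℝ) + 1 + ↑(k + 1) = (n + 1 + k) + 1 := by push_cast; ring
  have h₂ : (1 : ℝ) + ↑(k + 1) = (1 + k) + 1 := by push_cast; ring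
  have h₃ : (1 / 2 : ℝ) + ↑(k + 1) = (1 / 2 + k) + 1 := by push_cast; ring
  rw [watsonBracket, watsonBracket, h₁, h₂, h₃, rdigamma_add_one (by positivity),
    rdigamma_add_one (by positivity), rdigamma_add_one (by positivity)]
  ring

lemma watsonBracket_nonneg (n k : ℕ) : 0 ≤ watsonBracket n k := by
  have h₁ : rdigamma (1 / 2 + k) ≤ rdigamma (1 + k) :=
    rdigamma_monotoneOn (by simp only [Set.mem_Ioi]; positivity)
      (by simp only [Set.mem_Ioi]; positivity) (by norm_num)
  have h₂ : rdigamma (1 + k) ≤ rdigamma (n + 1 + k) :=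
    rdigamma_monotoneOn (by simp only [Set.mem_Ioi]; positivity)
      (by simp only [Set.mem_Ioi]; positivity) (by linarith [(n.cast_nonneg : (0 : ℝ) ≤ n)])
  rw [watsonBracket]
  linarith

lemma watsonBracket_le (n k : ℕ) :
    watsonBracket n k ≤ n / (1 + k) + 2 * ((1 / 2 : ℝ) + k)⁻¹ := by
  have h₁ : rdigamma (1 + k) ≤ rdigamma (1 / 2 + k) + ((1 / 2 : ℝ) + k)⁻¹ :=
    rdigamma_le_of_le_add_one (by positivity) (by positivity) (by linarith)
  have h₂ : rdigamma (n + 1 + k) ≤ rdigamma (1 + k) + n / (1 + k) := by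
    rw [show (n : ℝ) + 1 + k = 1 + k + n by ring]
    exact rdigamma_add_nat_le (by positivity) n
  rw [watsonBracket]
  linarith

lemma natCast_mul_watsonBracket_le (n k : ℕ) : k * watsonBracket n k ≤ n + 2 := by
  have hk : (0 : ℝ) ≤ k := k.cast_nonneg
  have h₁ : (k : ℝ) * (n / (1 + k)) ≤ n := by
    rw [mul_div_assoc', div_le_iff₀ (by positivity)]
    nlinarith [(n.cast_nonneg : (0 : ℝ) ≤ n)]
  have h₂ : (k : ℝ) * (2 * ((1 / 2 : ℝ) + k)⁻¹) ≤ 2 := by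
    have : (k : ℝ) / (1 / 2 + k) ≤ 1 := (div_le_one (by positivity)).2 (by linarith)
    rw [mul_left_comm, ← div_eq_mul_inv]
    linarith
  nlinarith [watsonBracket_le n k]

lemma watsonTerm_nonneg (n k : ℕ) : 0 ≤ watsonTerm n k :=
  mul_nonneg (watsonCoeff_pos n k).le (watsonBracket_nonneg n k)

lemma summable_watsonTerm_zero : Summable (watsonTerm 0) := by
  have hmaj : Summable fun k : ℕ => 1 / |(k : ℝ) + 1 / 2| ^ (2 : ℝ) :=
    (summable_one_div_nat_add_rpow _ _).2 one_lt_two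
  refine .of_nonneg_of_le (watsonTerm_nonneg 0) (fun k => ?_) hmaj
  have hB := watsonBracket_le 0 k
  rw [Nat.cast_zero, zero_div, zero_add] at hB
  rw [abs_of_pos (by positivity), rpow_two, watsonTerm]
  calc watsonCoeff 0 k * watsonBracket 0 k
        ≤ 1 / (2 * k + 1) * (2 * ((1 / 2 : ℝ) + k)⁻¹) :=
        mul_le_mul (watsonCoeff_le 0 k) hB (watsonBracket_nonneg 0 k) (by positivity)
    _ = 1 / (k + 1 / 2) ^ 2 := by field_simp; ring

noncomputable def wzConst (n : ℕ) : ℝ := 4 * (n + 1) / (2 * n + 1) ^ 2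

noncomputable def wzCertificate (n k : ℕ) : ℝ := watsonCoeff n k * (1 - k * watsonBracket n k)

lemma watsonTerm_succ_left (n k : ℕ) :
    watsonTerm (n + 1) k =
      wzConst n * (n * watsonTerm n k + (wzCertificate n k - wzCertificate n (k + 1))) := by
  rw [watsonTerm, watsonTerm, wzCertificate, wzCertificate, watsonCoeff_succ_left,
    watsonCoeff_succ_right, watsonBracket_succ_left, watsonBracket_succ_right, wzConst]
  push_cast
  field_simp
  ring

lemma abs_wzCertificate_le (n k : ℕ) : |wzCertificate n k| ≤ (n + 1) * watsonCoeff n k := by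
  have h₁ := natCast_mul_watsonBracket_le n k
  have h₂ : 0 ≤ k * watsonBracket n k := mul_nonneg k.cast_nonneg (watsonBracket_nonneg n k)
  rw [wzCertificate, abs_mul, abs_of_pos (watsonCoeff_pos n k), mul_comm]
  exact mul_le_mul_of_nonneg_right (abs_le.2 ⟨by linarith, by linarith⟩) (watsonCoeff_pos n k).le

lemma tendsto_wzCertificate_atTop (n : ℕ) : Tendsto (wzCertificate n) atTop (𝓝 0) := by
  refine squeeze_zero_norm (abs_wzCertificate_le n) ?_
  simpa using (tendsto_watsonCoeff_atTop n).const_mul ((n : ℝ) + 1)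

lemma sum_range_watsonTerm_succ_left (n K : ℕ) :
    ∑ k ∈ range K, watsonTerm (n + 1) k =
      wzConst n * (n * ∑ k ∈ range K, watsonTerm n k + (1 - wzCertificate n K)) := by
  simp_rw [watsonTerm_succ_left, ← mul_sum, sum_add_distrib, ← mul_sum, sum_range_sub']
  simp [wzCertificate]

lemma hasSum_watsonTerm_succ_left {n : ℕ} {T : ℝ} (h : HasSum (watsonTerm n) T) :
    HasSum (watsonTerm (n + 1)) (wzConst n * (n * T + 1)) := by
  rw [hasSum_iff_tendsto_nat_of_nonneg (watsonTerm_nonneg _)]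
  simp_rw [sum_range_watsonTerm_succ_left]
  simpa using ((h.tendsto_sum_nat.const_mul (n : ℝ)).add
    ((tendsto_wzCertificate_atTop n).const_sub 1)).const_mul (wzConst n)

lemma hasSum_watsonTerm_one : HasSum (watsonTerm 1) 4 := by
  simpa [wzConst] using hasSum_watsonTerm_succ_left summable_watsonTerm_zero.hasSum

noncomputable def landauSum (n : ℕ) : ℝ := ∑ k ∈ range n, rpoch (1 / 2) k ^ 2 / (k ! : ℝ) ^ 2

noncomputable def landauWeight (m : ℕ) : ℝ := rpoch (1 / 2) (m + 1) ^ 2 / (m ! * (m + 1)! : ℝ)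

lemma landauWeight_pos (m : ℕ) : 0 < landauWeight m := by
  have := rpoch_pos one_half_pos (m + 1)
  unfold landauWeight
  positivity

lemma Gamma_sq_div_Gamma_mul_Gamma_div_pi (m : ℕ) :
    Gamma (((m + 1 : ℕ) : ℝ) + 1 / 2) ^ 2 /
      (Gamma ((m + 1 : ℕ) : ℝ) * Gamma (((m + 1 : ℕ) : ℝ) + 1)) / π = landauWeight m := by
  rw [Gamma_nat_add_half_eq_rpoch, Gamma_nat_eq_factorial, Nat.cast_succ, Gamma_nat_eq_factorial,
    landauWeight, mul_pow, sq_sqrt pi_pos.le]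
  field_simp

lemma landauSum_div_landauWeight_succ (m : ℕ) :
    landauSum (m + 2) / landauWeight (m + 1) =
      wzConst (m + 1) * ((m + 1 : ℕ) * (landauSum (m + 1) / landauWeight m) + 1) := by
  have := rpoch_pos one_half_pos (m + 1)
  rw [landauSum, sum_range_succ, ← landauSum, landauWeight, landauWeight, wzConst,
    rpoch_succ _ (m + 1), Nat.factorial_succ (m + 1), Nat.factorial_succ m]
  push_cast
  field_simp
  ring

lemma hasSum_watsonTerm_landau (m : ℕ) :
    HasSum (watsonTerm (m + 1)) (landauSum (m + 1) / landauWeight m) := by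
  induction m with
  | zero =>
    convert hasSum_watsonTerm_one
    norm_num [landauSum, landauWeight, rpoch]
  | succ m ih =>
    simpa only [landauSum_div_landauWeight_succ] using hasSum_watsonTerm_succ_left ih

/-- Watson's convergent expansion for the Landau partial sums
`S_n = ∑_{k=0}^{n-1} ((1/2)_k)²/(k!)²`. -/
theorem landau_watson_expansion (n : ℕ) (hn : 0 < n) :
    ∑ k ∈ Finset.range n, (rpoch (1 / 2) k) ^ 2 / (Nat.factorial k : ℝ) ^ 2
      = Real.Gamma ((n : ℝ) + 1 / 2) ^ 2 / (Real.Gamma n * Real.Gamma ((n : ℝ) + 1)) / Real.pi *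
        ∑' k : ℕ, (rpoch (1 / 2) k) ^ 2 / (rpoch ((n : ℝ) + 1) k * (Nat.factorial k : ℝ)) *
          (rdigamma ((n : ℝ) + 1 + k) + rdigamma (1 + k) - 2 * rdigamma (1 / 2 + k)) := by
  obtain ⟨m, rfl⟩ := Nat.exists_eq_add_one_of_ne_zero hn.ne'
  change landauSum (m + 1) = _ * ∑' k, watsonTerm (m + 1) k
  rw [Gamma_sq_div_Gamma_mul_Gamma_div_pi, (hasSum_watsonTerm_landau m).tsum_eq,
    mul_div_cancel₀ _ (landauWeight_pos m).ne']
end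

section
/- Let a, b, c be complex with Re(c − a − b) > 0 and none of a, b, c a nonpositive integer. Then the partial sums S_n(a,b;c) = ∑_{k=0}^{n-1} (a)_k(b)_k/((c)_k k!) converge as n → ∞ to Γ(c)Γ(c−a−b)/(Γ(c−a)Γ(c−b)). -/
/-!
The terms `t_k(c)` of `₂F₁(a,b;c;1)` decay like `k^(a+b-c-1)`, so the series converges; summing
the telescoping identity between `t_k(c)`, `t_k(c+1)` and `t_{k+1}(c)` gives Gauss's contiguous
relation `c (c-a-b) F(c) = (c-a)(c-b) F(c+1)`. Iterating it `m` times expresses `F(c)` as a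
ratio of Pochhammer symbols times `F(c+m)`. As `m → ∞`, `F(c+m) → 1` by dominated convergence,
while the Pochhammer ratio tends to `Γ(c)Γ(c-a-b)/(Γ(c-a)Γ(c-b))` by Euler's limit formula.
-/

/-- The Pochhammer (rising factorial) symbol `(x)_k` for complex `x`. -/
noncomputable def cpoch (x : ℂ) (k : ℕ) : ℂ := ∏ i ∈ Finset.range k, (x + i)

open Filter Topology Asymptotics Complex
open scoped Nat

section Pochhammer

@[simp] lemma cpoch_zero (x : ℂ) : cpoch x 0 = 1 := Finset.prod_range_zero _

lemma cpoch_succ (x : ℂ) (k : ℕ) : cpoch x (k + 1) = cpoch x k * (x + k) :=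
  Finset.prod_range_succ _ _

lemma cpoch_one (k : ℕ) : cpoch 1 k = k ! := by
  induction k with
  | zero => simp
  | succ k ih => rw [cpoch_succ, ih, Nat.factorial_succ]; push_cast; ring

lemma cpoch_add_one_mul (x : ℂ) (k : ℕ) : cpoch (x + 1) k * x = cpoch x k * (x + k) := by
  induction k with
  | zero => simp
  | succ k ih => rw [cpoch_succ, cpoch_succ]; push_cast; linear_combination (x + 1 + k) * ih

lemma cpoch_ne_zero {x : ℂ} (hx : ∀ j : ℕ, x ≠ -j) (k : ℕ) : cpoch x k ≠ 0 :=
  Finset.prod_ne_zero_iff.2 fun j _ h => hx j (eq_neg_of_add_eq_zero_left h)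

lemma ne_neg_natCast_of_re_pos {x : ℂ} (hx : 0 < x.re) (j : ℕ) : x ≠ -j := by
  rintro rfl
  simp at hx
  linarith [(j.cast_nonneg : (0 : ℝ) ≤ j)]

lemma add_natCast_ne_neg_natCast {x : ℂ} (hx : ∀ j : ℕ, x ≠ -j) (n j : ℕ) :
    x + n ≠ -j :=
  fun h => hx (j + n) (by push_cast; linear_combination h)

end Pochhammer

section GammaSeq

lemma natCast_cpow_ne_zero {n : ℕ} (hn : n ≠ 0) (z : ℂ) : (n : ℂ) ^ z ≠ 0 :=
  fun h => hn (by exact_mod_cast ((cpow_eq_zero_iff _ _).1 h).1)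

lemma cpoch_succ_eq_inv_GammaSeq_mul (z : ℂ) {n : ℕ} (hn : n ≠ 0) :
    cpoch z (n + 1) = (GammaSeq z n)⁻¹ * ((n : ℂ) ^ z * n !) := by
  have : (n : ℂ) ^ z * n ! ≠ 0 :=
    mul_ne_zero (natCast_cpow_ne_zero hn z) (by simpa using n.factorial_ne_zero)
  rw [GammaSeq, inv_div, div_mul_cancel₀ _ this]
  rfl

lemma tendsto_inv_GammaSeq (z : ℂ) :
    Tendsto (fun n => (GammaSeq z n)⁻¹) atTop (𝓝 (Gamma z)⁻¹) := by
  by_cases hz : ∀ j : ℕ, z ≠ -j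
  · exact (GammaSeq_tendsto_Gamma z).inv₀ (Gamma_ne_zero hz)
  · obtain ⟨p, rfl⟩ := not_forall_not.1 hz
    rw [Gamma_neg_nat_eq_zero, inv_zero]
    refine tendsto_const_nhds.congr' ?_
    filter_upwards [eventually_ge_atTop p] with n hn
    -- at a pole the product in the denominator of `GammaSeq` vanishes from `n = p` on
    have : ∏ j ∈ Finset.range (n + 1), (-(p : ℂ) + j) = 0 :=
      Finset.prod_eq_zero (Finset.mem_range.2 (Nat.lt_succ_of_le hn)) (by simp)
    simp [GammaSeq, this]

theorem tendsto_cpoch_ratio_mul_cpow (x y : ℂ) {u v : ℂ} (hu : ∀ j : ℕ, u ≠ -j)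
    (hv : ∀ j : ℕ, v ≠ -j) :
    Tendsto (fun n : ℕ => cpoch x (n + 1) * cpoch y (n + 1) / (cpoch u (n + 1) * cpoch v (n + 1))
      * (n : ℂ) ^ (u + v - x - y)) atTop (𝓝 (Gamma u * Gamma v / (Gamma x * Gamma y))) := by
  have hlim := ((tendsto_inv_GammaSeq x).mul (tendsto_inv_GammaSeq y)).div
    ((tendsto_inv_GammaSeq u).mul (tendsto_inv_GammaSeq v))
    (mul_ne_zero (inv_ne_zero (Gamma_ne_zero hu)) (inv_ne_zero (Gamma_ne_zero hv)))
  rw [show (Gamma x)⁻¹ * (Gamma y)⁻¹ / ((Gamma u)⁻¹ * (Gamma v)⁻¹)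
      = Gamma u * Gamma v / (Gamma x * Gamma y) by simp [div_eq_mul_inv]; ring] at hlim
  refine hlim.congr' ?_
  filter_upwards [eventually_ne_atTop 0] with n hn
  have hN : (n : ℂ) ≠ 0 := Nat.cast_ne_zero.2 hn
  have hpow := natCast_cpow_ne_zero hn
  have hfac : (n ! : ℂ) ≠ 0 := by simpa using n.factorial_ne_zero
  have hGu := left_ne_zero_of_mul (cpoch_succ_eq_inv_GammaSeq_mul u hn ▸ cpoch_ne_zero hu (n + 1))
  have hGv := left_ne_zero_of_mul (cpoch_succ_eq_inv_GammaSeq_mul v hn ▸ cpoch_ne_zero hv (n + 1))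
  simp only [Pi.div_apply, cpoch_succ_eq_inv_GammaSeq_mul _ hn, cpow_sub _ _ hN, cpow_add _ _ hN]
  have := hpow x; have := hpow y; have := hpow u; have := hpow v
  field_simp

end GammaSeq

noncomputable def hyp2F1Term (a b c : ℂ) (k : ℕ) : ℂ :=
  cpoch a k * cpoch b k / (cpoch c k * k !)

noncomputable def hyp2F1One (a b c : ℂ) : ℂ := ∑' k, hyp2F1Term a b c k

section Asymptotics

variable {a b c : ℂ}

lemma hyp2F1Term_succ_eq_cpoch_ratio (n : ℕ) :
    hyp2F1Term a b c (n + 1)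
      = cpoch a (n + 1) * cpoch b (n + 1) / (cpoch c (n + 1) * cpoch 1 (n + 1)) := by
  rw [hyp2F1Term, cpoch_one]

lemma isBigO_hyp2F1Term_succ (hc : ∀ j : ℕ, c ≠ -j) :
    (fun n => hyp2F1Term a b c (n + 1)) =O[atTop]
      fun n : ℕ => (n : ℝ) ^ (-(1 + (c - a - b).re)) := by
  have hbdd : (fun n : ℕ => hyp2F1Term a b c (n + 1) * (n : ℂ) ^ (c + 1 - a - b)) =O[atTop]
      fun _ => (1 : ℝ) := by
    have h1 : ∀ j : ℕ, (1 : ℂ) ≠ -j := ne_neg_natCast_of_re_pos (by simp)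
    simpa only [hyp2F1Term_succ_eq_cpoch_ratio] using
      (tendsto_cpoch_ratio_mul_cpow a b hc h1).isBigO_one ℝ
  have hpow : (fun n : ℕ => ((n : ℂ) ^ (c + 1 - a - b))⁻¹) =O[atTop]
      fun n : ℕ => (n : ℝ) ^ (-(1 + (c - a - b).re)) := by
    refine IsBigO.of_bound 1 ?_
    filter_upwards [eventually_gt_atTop 0] with n hn
    rw [← cpow_neg, norm_natCast_cpow_of_pos hn, Real.norm_of_nonneg (by positivity)]
    simp only [neg_re, sub_re, add_re, one_re, one_mul]
    exact le_of_eq (by ring_nf)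
  refine (hbdd.mul hpow).congr' ?_ (by simp)
  filter_upwards [eventually_ne_atTop 0] with n hn
  rw [mul_assoc, mul_inv_cancel₀ (natCast_cpow_ne_zero hn _), mul_one]

lemma summable_norm_hyp2F1Term (hs : 0 < (c - a - b).re) (hc : ∀ j : ℕ, c ≠ -j) :
    Summable fun k => ‖hyp2F1Term a b c k‖ :=
  (summable_nat_add_iff 1).1 <| summable_of_isBigO_nat
    (Real.summable_nat_rpow.2 (by linarith)) (isBigO_hyp2F1Term_succ hc).norm_left

lemma tendsto_natCast_mul_hyp2F1Term (hs : 0 < (c - a - b).re) (hc : ∀ j : ℕ, c ≠ -j) :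
    Tendsto (fun n : ℕ => n * hyp2F1Term a b c n) atTop (𝓝 0) := by
  have hlin : (fun n : ℕ => (n : ℂ) + 1) =O[atTop] fun n : ℕ => (n : ℝ) := by
    refine IsBigO.of_bound 2 ?_
    filter_upwards [eventually_ge_atTop 1] with n hn
    have : (1 : ℝ) ≤ n := by exact_mod_cast hn
    rw [show (n : ℂ) + 1 = ((n + 1 : ℕ) : ℂ) by push_cast; rfl, Complex.norm_natCast]
    push_cast
    rw [Real.norm_of_nonneg (by positivity)]
    linarith
  have hdecay :
      Tendsto (fun n : ℕ => (n : ℝ) * (n : ℝ) ^ (-(1 + (c - a - b).re))) atTop (𝓝 0) := by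
    refine ((tendsto_rpow_neg_atTop hs).comp tendsto_natCast_atTop_atTop).congr' ?_
    filter_upwards [eventually_ne_atTop 0] with n hn
    rw [Function.comp_apply, mul_comm, ← Real.rpow_add_one (by exact_mod_cast hn)]
    ring_nf
  have := (hlin.mul (isBigO_hyp2F1Term_succ (b := b) hc)).trans_tendsto hdecay
  exact (tendsto_add_atTop_iff_nat 1).1 (by simpa using this)

end Asymptotics

section Contiguous

variable {a b c : ℂ}

lemma hyp2F1Term_add_one_mul (hc : ∀ j : ℕ, c ≠ -j) (k : ℕ) :
    hyp2F1Term a b (c + 1) k * (c + k) = hyp2F1Term a b c k * c := by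
  have hc1 := cpoch_ne_zero (by simpa using add_natCast_ne_neg_natCast hc 1) k
  have := cpoch_ne_zero hc k
  have hfac : (k ! : ℂ) ≠ 0 := by simpa using k.factorial_ne_zero
  rw [hyp2F1Term, hyp2F1Term]
  field_simp
  linear_combination -(cpoch a k * cpoch b k) * cpoch_add_one_mul c k

lemma hyp2F1Term_succ_mul (hc : ∀ j : ℕ, c ≠ -j) (k : ℕ) :
    hyp2F1Term a b c (k + 1) * ((c + k) * (k + 1)) = hyp2F1Term a b c k * ((a + k) * (b + k)) := by
  have := cpoch_ne_zero hc k
  have hck : c + k ≠ 0 := fun h => hc k (eq_neg_of_add_eq_zero_left h)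
  have hfac : (k ! : ℂ) ≠ 0 := by simpa using k.factorial_ne_zero
  have hk : (k : ℂ) + 1 ≠ 0 := by exact_mod_cast k.succ_ne_zero
  rw [hyp2F1Term, hyp2F1Term, cpoch_succ, cpoch_succ, cpoch_succ, Nat.factorial_succ]
  push_cast
  field_simp

lemma hyp2F1Term_contiguous_eq_sub (hc : ∀ j : ℕ, c ≠ -j) (k : ℕ) :
    c * (c - a - b) * hyp2F1Term a b c k - (c - a) * (c - b) * hyp2F1Term a b (c + 1) k
      = c * k * hyp2F1Term a b c k - c * (k + 1 : ℕ) * hyp2F1Term a b c (k + 1) := by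
  have hck : c + k ≠ 0 := fun h => hc k (eq_neg_of_add_eq_zero_left h)
  refine mul_left_cancel₀ hck ?_
  push_cast
  linear_combination -((c - a) * (c - b)) * hyp2F1Term_add_one_mul (b := b) hc k
    + c * hyp2F1Term_succ_mul (a := a) (b := b) hc k

lemma hyp2F1One_contiguous (hs : 0 < (c - a - b).re) (hc : ∀ j : ℕ, c ≠ -j) :
    c * (c - a - b) * hyp2F1One a b c = (c - a) * (c - b) * hyp2F1One a b (c + 1) := by
  have hc1 : ∀ j : ℕ, c + 1 ≠ -j := by simpa using add_natCast_ne_neg_natCast hc 1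
  have hs1 : 0 < (c + 1 - a - b).re := by simp only [sub_re, add_re, one_re] at hs ⊢; linarith
  have hsum := (((summable_norm_hyp2F1Term hs hc).of_norm.hasSum.mul_left (c * (c - a - b))).sub
    ((summable_norm_hyp2F1Term hs1 hc1).of_norm.hasSum.mul_left ((c - a) * (c - b))))
    |>.tendsto_sum_nat
  -- the partial sums telescope to `-c n t_n`, which tends to zero
  simp only [hyp2F1Term_contiguous_eq_sub hc, Finset.sum_range_sub', Nat.cast_zero, mul_zero,
    zero_mul, zero_sub] at hsum
  have hzero := ((tendsto_natCast_mul_hyp2F1Term hs hc).const_mul c).neg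
  simp only [mul_zero, neg_zero, ← mul_assoc] at hzero
  exact sub_eq_zero.1 (tendsto_nhds_unique hsum hzero)

lemma cpoch_mul_hyp2F1One (hs : 0 < (c - a - b).re) (hc : ∀ j : ℕ, c ≠ -j) (m : ℕ) :
    cpoch c m * cpoch (c - a - b) m * hyp2F1One a b c
      = cpoch (c - a) m * cpoch (c - b) m * hyp2F1One a b (c + m) := by
  induction m with
  | zero => simp
  | succ n ih =>
    have hsn : 0 < (c + n - a - b).re := by
      simpa [add_sub_right_comm] using add_pos_of_pos_of_nonneg hs n.cast_nonneg
    have hcontig := hyp2F1One_contiguous hsn (add_natCast_ne_neg_natCast hc n)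
    rw [Nat.cast_succ, ← add_assoc, cpoch_succ, cpoch_succ, cpoch_succ, cpoch_succ]
    linear_combination (c + n) * (c - a - b + n) * ih + cpoch (c - a) n * cpoch (c - b) n * hcontig

end Contiguous

section LimitAtInfinity

variable {a b : ℂ}

lemma norm_cpoch_ofReal_le {ρ : ℝ} (hρ : 0 ≤ ρ) {d : ℂ} (hd : ρ ≤ d.re) (k : ℕ) :
    ‖cpoch ρ k‖ ≤ ‖cpoch d k‖ := by
  simp only [cpoch, norm_prod]
  refine Finset.prod_le_prod (fun _ _ => norm_nonneg _) fun i _ => ?_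
  rw [← ofReal_natCast, ← ofReal_add, norm_real, Real.norm_of_nonneg (by positivity)]
  calc ρ + i ≤ (d + i).re := by simpa using hd
    _ ≤ ‖d + i‖ := re_le_norm _

lemma norm_hyp2F1Term_le {ρ : ℝ} (hρ : 0 < ρ) {d : ℂ} (hd : ρ ≤ d.re) (k : ℕ) :
    ‖hyp2F1Term a b d k‖ ≤ ‖hyp2F1Term a b ρ k‖ := by
  have hpos : 0 < ‖cpoch ρ k‖ :=
    norm_pos_iff.2 (cpoch_ne_zero (ne_neg_natCast_of_re_pos (by simpa using hρ)) k)
  simp only [hyp2F1Term, norm_div, norm_mul]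
  have hfac : 0 < ‖(k ! : ℂ)‖ := by simpa using k.factorial_pos
  exact div_le_div_of_nonneg_left (by positivity) (mul_pos hpos hfac)
    (mul_le_mul_of_nonneg_right (norm_cpoch_ofReal_le hρ.le hd k) (norm_nonneg _))

lemma tendsto_inv_cpoch_add_natCast (c : ℂ) {k : ℕ} (hk : k ≠ 0) :
    Tendsto (fun m : ℕ => (cpoch (c + m) k)⁻¹) atTop (𝓝 0) := by
  simp only [cpoch, ← Finset.prod_inv_distrib]
  rw [show (0 : ℂ) = ∏ _ ∈ Finset.range k, 0 by simp [hk]]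
  refine tendsto_finsetProd _ fun i _ => tendsto_inv₀_cobounded.comp ?_
  have := (tendsto_add_const_cobounded (c + i)).comp (tendsto_natCast_atTop_cobounded (α := ℂ))
  exact this.congr fun m => by simp [add_comm, add_left_comm]

lemma tendsto_hyp2F1Term_add_natCast (c : ℂ) (k : ℕ) :
    Tendsto (fun m : ℕ => hyp2F1Term a b (c + m) k) atTop (𝓝 (if k = 0 then 1 else 0)) := by
  rcases eq_or_ne k 0 with rfl | hk
  · simp [hyp2F1Term]
  · have := (tendsto_inv_cpoch_add_natCast c hk).const_mul (cpoch a k * cpoch b k / k !)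
    rw [mul_zero] at this
    rw [if_neg hk]
    refine this.congr fun m => ?_
    simp only [hyp2F1Term, div_eq_mul_inv, mul_inv]
    ring

lemma tendsto_hyp2F1One_add_natCast (c : ℂ) :
    Tendsto (fun m : ℕ => hyp2F1One a b (c + m)) atTop (𝓝 1) := by
  -- dominate by the terms at a real parameter `ρ > max 0 (Re (a + b))`
  set ρ : ℝ := max 1 ((a + b).re + 1)
  have hρ : 0 < ρ := lt_max_of_lt_left one_pos
  have hρab : 0 < ((ρ : ℂ) - a - b).re := by
    have : (a + b).re + 1 ≤ ρ := le_max_right _ _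
    simp only [sub_re, ofReal_re, add_re] at this ⊢
    linarith
  have hdom := summable_norm_hyp2F1Term hρab (ne_neg_natCast_of_re_pos (by simpa using hρ))
  obtain ⟨N, hN⟩ := exists_nat_ge (ρ - c.re)
  have hbound :
      ∀ᶠ m : ℕ in atTop, ∀ k, ‖hyp2F1Term a b (c + m) k‖ ≤ ‖hyp2F1Term a b ρ k‖ := by
    filter_upwards [eventually_ge_atTop N] with m hm k
    refine norm_hyp2F1Term_le hρ ?_ k
    have : (N : ℝ) ≤ m := by exact_mod_cast hm
    simp only [add_re, natCast_re]
    linarith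
  simpa [hyp2F1One] using
    tendsto_tsum_of_dominated_convergence hdom (tendsto_hyp2F1Term_add_natCast c) hbound

end LimitAtInfinity

lemma hyp2F1One_eq_cpoch_ratio_mul {a b c : ℂ} (hs : 0 < (c - a - b).re)
    (hc : ∀ j : ℕ, c ≠ -j) (m : ℕ) : hyp2F1One a b c = cpoch (c - a) m * cpoch (c - b) m
      / (cpoch c m * cpoch (c - a - b) m) * hyp2F1One a b (c + m) := by
  rw [div_mul_eq_mul_div, eq_div_iff (mul_ne_zero (cpoch_ne_zero hc m)
    (cpoch_ne_zero (ne_neg_natCast_of_re_pos hs) m)), mul_comm]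
  exact cpoch_mul_hyp2F1One hs hc m

theorem hyp2F1One_eq_Gamma_div {a b c : ℂ} (hs : 0 < (c - a - b).re)
    (hc : ∀ j : ℕ, c ≠ -j) :
    hyp2F1One a b c = Gamma c * Gamma (c - a - b) / (Gamma (c - a) * Gamma (c - b)) := by
  refine tendsto_nhds_unique (f := fun _ : ℕ => hyp2F1One a b c) (l := atTop)
    tendsto_const_nhds ?_
  have hlim := (tendsto_cpoch_ratio_mul_cpow (c - a) (c - b) hc (ne_neg_natCast_of_re_pos hs)).mul
    ((tendsto_hyp2F1One_add_natCast (a := a) (b := b) c).comp (tendsto_add_atTop_nat 1))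
  rw [mul_one] at hlim
  refine hlim.congr fun n => ?_
  rw [show c + (c - a - b) - (c - a) - (c - b) = 0 by ring, cpow_zero, mul_one,
    Function.comp_apply, ← hyp2F1One_eq_cpoch_ratio_mul hs hc]

theorem gauss_summation_general (a b c : ℂ) (hs : 0 < (c - a - b).re)
    (hc : ∀ j : ℕ, c ≠ -(j : ℂ)) :
    Filter.Tendsto
      (fun n : ℕ =>
        ∑ k ∈ Finset.range n, cpoch a k * cpoch b k / (cpoch c k * (Nat.factorial k : ℂ)))
      Filter.atTop
      (nhds (Complex.Gamma c * Complex.Gamma (c - a - b) /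
        (Complex.Gamma (c - a) * Complex.Gamma (c - b)))) := by
  rw [← hyp2F1One_eq_Gamma_div hs hc]
  exact (summable_norm_hyp2F1Term hs hc).of_norm.hasSum.tendsto_sum_nat

/-- Gauss's summation theorem: for `Re(c−a−b) > 0` the partial sums of `₂F₁(a,b;c;1)`
converge to `Γ(c)Γ(c−a−b)/(Γ(c−a)Γ(c−b))`. -/
theorem gauss_summation (a b c : ℂ) (hs : 0 < (c - a - b).re)
    (ha : ∀ j : ℕ, a ≠ -(j : ℂ)) (hb : ∀ j : ℕ, b ≠ -(j : ℂ)) (hc : ∀ j : ℕ, c ≠ -(j : ℂ)) :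
    Filter.Tendsto
      (fun n : ℕ =>
        ∑ k ∈ Finset.range n, cpoch a k * cpoch b k / (cpoch c k * (Nat.factorial k : ℂ)))
      Filter.atTop
      (nhds (Complex.Gamma c * Complex.Gamma (c - a - b) /
        (Complex.Gamma (c - a) * Complex.Gamma (c - b)))) :=
  gauss_summation_general a b c hs hc
end

section
/- Let a, b be complex numbers, not nonpositive integers, with c = a + b. Then as n → ∞ the partial sums satisfy S_n(a,b;a+b) = ∑_{k=0}^{n-1} (a)_k(b)_k/((a+b)_k k!) ∼ (Γ(a+b)/(Γ(a)Γ(b))) · log n, i.e., S_n(a,b;a+b)/log n → Γ(a+b)/(Γ(a)Γ(b)). -/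
open Filter Asymptotics Topology Finset

theorem tendsto_log_natCast_atTop : Tendsto (fun n : ℕ => Real.log n) atTop atTop :=
  Real.tendsto_log_atTop.comp tendsto_natCast_atTop_atTop

theorem sum_range_inv_natCast_eq_harmonic_sub (n : ℕ) :
    ∑ k ∈ range n, (k : ℝ)⁻¹ = harmonic n - (n : ℝ)⁻¹ := by
  induction n with
  | zero => simp
  | succ n ih =>
    rw [sum_range_succ, ih, harmonic_succ]
    push_cast
    ring

theorem tendsto_sum_range_inv_natCast_sub_log :
    Tendsto (fun n : ℕ => ∑ k ∈ range n, (k : ℝ)⁻¹ - Real.log n) atTop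
      (𝓝 Real.eulerMascheroniConstant) := by
  have h := Real.tendsto_harmonic_sub_log.sub tendsto_inv_atTop_nhds_zero_nat
  rw [sub_zero] at h
  refine h.congr fun n => ?_
  rw [sum_range_inv_natCast_eq_harmonic_sub]
  ring

theorem isEquivalent_sum_range_inv_natCast_log :
    (fun n : ℕ => ∑ k ∈ range n, (k : ℝ)⁻¹) ~[atTop] fun n => Real.log n := by
  have hbounded := tendsto_sum_range_inv_natCast_sub_log.isBigO_one ℝ
  exact hbounded.trans_isLittleO <|
    isLittleO_const_left.mpr <| Or.inr <| tendsto_norm_atTop_atTop.comp tendsto_log_natCast_atTop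

theorem tendsto_inv_log_smul_sum_range_of_tendsto_natCast_smul {E : Type*}
    [NormedAddCommGroup E] [NormedSpace ℝ E] {f : ℕ → E} {C : E}
    (hf : Tendsto (fun k : ℕ => (k : ℝ) • f k) atTop (𝓝 C)) :
    Tendsto (fun n : ℕ => (Real.log n)⁻¹ • ∑ k ∈ range n, f k) atTop (𝓝 C) := by
  set H : ℕ → ℝ := fun n => ∑ k ∈ range n, (k : ℝ)⁻¹
  have hH : H ~[atTop] fun n => Real.log n := isEquivalent_sum_range_inv_natCast_log
  have hH_div : Tendsto (fun n : ℕ => (Real.log n)⁻¹ * H n) atTop (𝓝 1) :=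
    ((isEquivalent_iff_tendsto_one (tendsto_log_natCast_atTop.eventually_ne_atTop 0)).mp
      hH).congr fun n => div_eq_inv_mul _ _
  have hremainder : (fun k : ℕ => f k - (k : ℝ)⁻¹ • C) =o[atTop] fun k => (k : ℝ)⁻¹ := by
    have h := (isBigO_refl (fun k : ℕ => (k : ℝ)⁻¹) atTop).smul_isLittleO
      ((isLittleO_one_iff ℝ).mpr (tendsto_sub_nhds_zero_iff.mpr hf))
    refine h.congr' ?_ (Eventually.of_forall fun k => mul_one _)
    filter_upwards [eventually_ne_atTop 0] with k hk
    rw [smul_sub, smul_smul, inv_mul_cancel₀ (Nat.cast_ne_zero.mpr hk), one_smul]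
  have hsum : (fun n => ∑ k ∈ range n, (f k - (k : ℝ)⁻¹ • C)) =o[atTop] fun n => Real.log n :=
    (hremainder.sum_range (fun k => inv_nonneg.mpr k.cast_nonneg)
      (hH.symm.tendsto_atTop tendsto_log_natCast_atTop)).trans_isBigO hH.isBigO
  have h := hsum.tendsto_inv_smul_nhds_zero.add (hH_div.smul_const C)
  rw [zero_add, one_smul] at h
  refine h.congr fun n => ?_
  rw [sum_sub_distrib, ← sum_smul, mul_smul, ← smul_add, sub_add_cancel]

noncomputable def hypergeomTerm (a b c : ℂ) (k : ℕ) : ℂ :=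
  cpoch a k * cpoch b k / (cpoch c k * (Nat.factorial k : ℂ))

theorem Complex.GammaSeq_eq_div_cpoch (s : ℂ) (n : ℕ) :
    Complex.GammaSeq s n = (n : ℂ) ^ s * n.factorial / cpoch s (n + 1) := rfl

theorem natCast_succ_mul_hypergeomTerm_succ (a b : ℂ) {n : ℕ} (hn : n ≠ 0) :
    ((n + 1 : ℕ) : ℂ) * hypergeomTerm a b (a + b) (n + 1) =
      Complex.GammaSeq (a + b) n / (Complex.GammaSeq a n * Complex.GammaSeq b n) := by
  have hn' : (n : ℂ) ≠ 0 := Nat.cast_ne_zero.mpr hn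
  have hpow (s : ℂ) : (n : ℂ) ^ s ≠ 0 := Complex.cpow_ne_zero_iff.mpr (Or.inl hn')
  simp only [hypergeomTerm, Complex.GammaSeq_eq_div_cpoch, Complex.cpow_add _ _ hn',
    Nat.factorial_succ]
  push_cast
  field_simp [hpow a, hpow b]

theorem tendsto_natCast_mul_hypergeomTerm {a b : ℂ} (ha : ∀ j : ℕ, a ≠ -(j : ℂ))
    (hb : ∀ j : ℕ, b ≠ -(j : ℂ)) :
    Tendsto (fun n : ℕ => (n : ℂ) * hypergeomTerm a b (a + b) n) atTop
      (𝓝 (Complex.Gamma (a + b) / (Complex.Gamma a * Complex.Gamma b))) := by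
  rw [← tendsto_add_atTop_iff_nat 1]
  refine ((Complex.GammaSeq_tendsto_Gamma (a + b)).div
    ((Complex.GammaSeq_tendsto_Gamma a).mul (Complex.GammaSeq_tendsto_Gamma b))
    (mul_ne_zero (Complex.Gamma_ne_zero ha) (Complex.Gamma_ne_zero hb))).congr' ?_
  filter_upwards [eventually_ne_atTop 0] with n hn
  exact_mod_cast (natCast_succ_mul_hypergeomTerm_succ a b hn).symm

/-- Hill's leading asymptotic in the logarithmic case `c = a + b`:
`S_n(a,b;a+b) ∼ (Γ(a+b)/(Γ(a)Γ(b))) log n`. -/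
theorem hill_logarithmic_asymptotic (a b : ℂ)
    (ha : ∀ j : ℕ, a ≠ -(j : ℂ)) (hb : ∀ j : ℕ, b ≠ -(j : ℂ)) :
    Filter.Tendsto
      (fun n : ℕ =>
        (∑ k ∈ Finset.range n,
            cpoch a k * cpoch b k / (cpoch (a + b) k * (Nat.factorial k : ℂ)))
          / (Real.log n : ℂ))
      Filter.atTop
      (nhds (Complex.Gamma (a + b) / (Complex.Gamma a * Complex.Gamma b))) := by
  have hsum := tendsto_inv_log_smul_sum_range_of_tendsto_natCast_smul
    (f := hypergeomTerm a b (a + b)) (by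
      simpa only [Complex.real_smul, Complex.ofReal_natCast] using
        tendsto_natCast_mul_hypergeomTerm ha hb)
  refine hsum.congr fun n => ?_
  rw [Complex.real_smul, Complex.ofReal_inv, ← div_eq_inv_mul]
  rfl
end
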